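/- arXiv:1701.08506 — 2 statements merged into one kernel-verified Lean document; each statement's English description precedes it below -/
import Mathlib

section
/- If k ≥ 3 is odd and a₁, ..., a_{k-1} are distinct positive integers with aᵢ ≡ i (mod k) for each i, and a₁ + ⋯ + a_{k-1} is even, then Cay(ℤ, ±{a₁, ..., a_{k-1}, k}) admits a decomposition into k edge-disjoint two-way-infinite Hamilton paths. -/
/-- Infinite circulant graph on ℤ: `u ~ v` iff `u - v ∈ S` or `v - u ∈ S`. -/
def cay (S : Set ℤ) : SimpleGraph ℤ where
  Adj u v := u ≠ v ∧ (u - v ∈ S ∨ v - u ∈ S)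
  symm := by
    constructor
    intro u v h
    exact ⟨h.1.symm, h.2.symm⟩
  loopless := by
    constructor
    intro v h
    exact h.1 rfl

/-- `H` is a two-way-infinite Hamilton path of `G`: a connected spanning subgraph
in which every vertex has degree 2. -/
def IsHamPath (G H : SimpleGraph ℤ) : Prop :=
  H ≤ G ∧ H.Connected ∧ ∀ v : ℤ, (H.neighborSet v).ncard = 2

/-- `G` decomposes into `k` edge-disjoint two-way-infinite Hamilton paths. -/
def HamDecomp (G : SimpleGraph ℤ) (k : ℕ) : Prop :=
  ∃ D : Fin k → SimpleGraph ℤ,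
    (∀ i, IsHamPath G (D i)) ∧
    (∀ i j, i ≠ j → Disjoint (D i).edgeSet (D j).edgeSet) ∧
    ∀ e ∈ G.edgeSet, ∃ i, e ∈ (D i).edgeSet

/-!
Write `S u = a₁ - a₂ + ⋯ ± a_u` for `u < k` (`altSum`, with `a` indexed from `0`). Since
`aᵢ ≡ i (mod k)`, `S u` is congruent to `0, 1, -1, 2, -2, …`, so for odd `k` the `S u` form a
complete residue system modulo `k` and `(u, w) ↦ S u + k w` is a bijection from
`{0, …, k-1} × ℤ` onto `ℤ`. Traversing this grid row by row, alternately left to right and right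
to left, gives a two-way-infinite Hamilton path `P` whose steps have length `aᵢ` inside a row and
`k` between rows. The translates `P + 2j`, `0 ≤ j < k`, decompose the graph: an edge of length
`aᵢ` lies in `P + 2j` iff `2j` is a prescribed residue modulo `k`, and so does an edge
`{n, n + k}`, the residue depending on the parity of `n` (this is where the evenness of
`S (k-1) ≡ ∑ aᵢ (mod 2)` enters). As `k` is odd, `j` is unique.
-/

open SimpleGraph

lemma hasse_int_adj {x y : ℤ} : (hasse ℤ).Adj x y ↔ y = x + 1 ∨ x = y + 1 := by
  simp [hasse_adj, Order.covBy_iff_add_one_eq, eq_comm]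

lemma hasse_int_neighborSet (t : ℤ) : (hasse ℤ).neighborSet t = {t - 1, t + 1} := by
  ext x
  simp only [mem_neighborSet, hasse_int_adj, Set.mem_insert_iff, Set.mem_singleton_iff]
  omega

lemma isHamPath_map_hasse {G : SimpleGraph ℤ} (e : ℤ ≃ ℤ) (h : ∀ t, G.Adj (e t) (e (t + 1))) :
    IsHamPath G ((hasse ℤ).map e.toEmbedding) := by
  refine ⟨?_, (Connected.mk (hasse_preconnected_of_succ ℤ)).map (Iso.map e _).toHom e.surjective,
    fun v => ?_⟩
  · rintro _ _ ⟨-, x, y, hxy, rfl, rfl⟩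
    rcases hasse_int_adj.mp hxy with rfl | rfl
    exacts [h x, (h y).symm]
  · obtain ⟨t, rfl⟩ := e.surjective v
    rw [← e.coe_toEmbedding, neighborSet_map, hasse_int_neighborSet,
      Set.ncard_image_of_injective _ e.toEmbedding.injective, Set.ncard_pair (by omega)]

lemma mem_edgeSet_map_hasse (e : ℤ ≃ ℤ) (z : Sym2 ℤ) :
    z ∈ ((hasse ℤ).map e.toEmbedding).edgeSet ↔ ∃ t, z = s(e t, e (t + 1)) := by
  rw [edgeSet_map]
  constructor
  · rintro ⟨w, hw, rfl⟩
    induction w with | _ x y =>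
    rw [mem_edgeSet, hasse_int_adj] at hw
    rcases hw with rfl | rfl
    · exact ⟨x, rfl⟩
    · exact ⟨y, Sym2.eq_swap⟩
  · rintro ⟨t, rfl⟩
    exact ⟨s(t, t + 1), hasse_int_adj.mpr (Or.inl rfl), rfl⟩

lemma hamDecomp_of_existsUnique {G : SimpleGraph ℤ} {k : ℕ} (D : Fin k → SimpleGraph ℤ)
    (hD : ∀ i, IsHamPath G (D i)) (huniq : ∀ z ∈ G.edgeSet, ∃! i, z ∈ (D i).edgeSet) :
    HamDecomp G k := by
  refine ⟨D, hD, fun i j hij => Set.disjoint_left.mpr fun z hi hj => hij ?_,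
    fun z hz => (huniq z hz).exists⟩
  exact (huniq z (edgeSet_mono (hD i).1 hi)).unique hi hj

lemma cay_adj_of_sym2_eq {S : Set ℤ} {x y n d : ℤ} (hd : d ∈ S) (hd0 : d ≠ 0)
    (h : s(x, y) = s(n, n + d)) : (cay S).Adj x y := by
  rcases Sym2.eq_iff.mp h with ⟨rfl, rfl⟩ | ⟨rfl, rfl⟩
  · exact ⟨by omega, Or.inr (by rwa [add_sub_cancel_left])⟩
  · exact ⟨by omega, Or.inl (by rwa [add_sub_cancel_left])⟩

lemma exists_eq_sym2_of_mem_edgeSet_cay {S : Set ℤ} {z : Sym2 ℤ}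
    (hz : z ∈ (cay S).edgeSet) : ∃ n, ∃ d ∈ S, z = s(n, n + d) := by
  induction z with | _ x y =>
  obtain ⟨-, h | h⟩ := hz
  · exact ⟨y, x - y, h, Sym2.eq_iff.mpr (Or.inr ⟨by ring, rfl⟩)⟩
  · exact ⟨x, y - x, h, Sym2.eq_iff.mpr (Or.inl ⟨rfl, by ring⟩)⟩

lemma sym2_add_right {x y n m : ℤ} (h : s(x, y) = s(n, m)) (c : ℤ) :
    s(x + c, y + c) = s(n + c, m + c) := by
  simpa using congrArg (Sym2.map (· + c)) h

lemma sym2_add_eq_sym2_add_iff {n n' d d' : ℤ} (hd : 0 < d) (hd' : 0 < d') :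
    s(n, n + d) = s(n', n' + d') ↔ n = n' ∧ d = d' := by
  rw [Sym2.eq_iff]
  omega

lemma sub_modEq_iff_modEq_sub {n a b c : ℤ} : a - b ≡ c [ZMOD n] ↔ b ≡ a - c [ZMOD n] := by
  rw [Int.modEq_iff_dvd, Int.modEq_iff_dvd, ← dvd_neg, neg_sub, sub_right_comm]

lemma existsUnique_fin_modEq {k : ℕ} (hk : 0 < k) {f : ℕ → ℤ}
    (hf : ∀ u < k, ∀ v < k, f u ≡ f v [ZMOD k] → u = v) (n : ℤ) :
    ∃! u : Fin k, f u ≡ n [ZMOD k] := by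
  have : NeZero k := ⟨hk.ne'⟩
  have hinj : Function.Injective fun u : Fin k => (f u : ZMod k) := fun u v h =>
    Fin.ext <| hf u u.2 v v.2 <| (ZMod.intCast_eq_intCast_iff _ _ _).mp h
  obtain ⟨u, hu⟩ := ((Fintype.bijective_iff_injective_and_card _).mpr
    ⟨hinj, by simp⟩).surjective (n : ZMod k)
  refine ⟨u, (ZMod.intCast_eq_intCast_iff _ _ _).mp hu, fun v hv => hinj ?_⟩
  simp only [hu, (ZMod.intCast_eq_intCast_iff _ _ _).mpr hv]

lemma existsUnique_fin_two_mul_modEq {k : ℕ} (hk : Odd k) (n : ℤ) :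
    ∃! j : Fin k, 2 * (j : ℤ) ≡ n [ZMOD k] := by
  refine existsUnique_fin_modEq (f := fun u => 2 * (u : ℤ)) hk.pos (fun u _ v _ h => ?_) n
  have h' := Int.ModEq.cancel_left_div_gcd (by exact_mod_cast hk.pos) h
  rw [show Int.gcd (k : ℤ) 2 = 1 from Nat.coprime_two_right.mpr hk, Nat.cast_one,
    Int.ediv_one, Int.natCast_modEq_iff] at h'
  exact h'.eq_of_lt_of_lt (by omega) (by omega)

lemma sub_two_mul_modEq_two_mul_iff {k : ℕ} (hk : Odd k) (n m L : ℤ) :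
    n - 2 * m ≡ L [ZMOD 2 * k] ↔ Even (n - L) ∧ 2 * m ≡ n - L [ZMOD k] := by
  rw [← Int.modEq_and_modEq_iff_modEq_mul (by simpa using hk), sub_modEq_iff_modEq_sub,
    sub_modEq_iff_modEq_sub, Int.even_iff]
  exact and_congr_left' (by unfold Int.ModEq; omega)

def altSum (b : ℕ → ℤ) (u : ℕ) : ℤ := ∑ t ∈ Finset.range u, (-1) ^ t * b t

section AltSum

variable {k u : ℕ} {b c : ℕ → ℤ}

@[simp] lemma altSum_zero (b : ℕ → ℤ) : altSum b 0 = 0 := rfl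

lemma altSum_succ (b : ℕ → ℤ) (u : ℕ) : altSum b (u + 1) = altSum b u + (-1) ^ u * b u :=
  Finset.sum_range_succ _ _

lemma altSum_natCast_add_one (u : ℕ) :
    altSum (fun t => (t : ℤ) + 1) u = if u % 2 = 0 then -((u : ℤ) / 2) else ((u : ℤ) + 1) / 2 := by
  induction u with
  | zero => rfl
  | succ u ih =>
    rw [altSum_succ, ih]
    rcases Nat.even_or_odd u with hu | hu
    · have := Nat.even_iff.mp hu
      rw [hu.neg_one_pow, if_pos this, if_neg (by omega)]
      push_cast; omega
    · have := Nat.odd_iff.mp hu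
      rw [hu.neg_one_pow, if_neg (by omega), if_pos (by omega)]
      push_cast; omega

lemma altSum_modEq (hbc : ∀ t < u, b t ≡ c t [ZMOD k]) : altSum b u ≡ altSum c u [ZMOD k] :=
  Int.ModEq.sum fun t ht => (hbc t (Finset.mem_range.mp ht)).mul_left _

lemma even_altSum_iff : Even (altSum b u) ↔ Even (∑ t ∈ Finset.range u, b t) := by
  have : altSum b u ≡ ∑ t ∈ Finset.range u, b t [ZMOD 2] := Int.ModEq.sum fun t _ => by
    rcases neg_one_pow_eq_or ℤ t with h | h <;> rw [h]
    · rw [one_mul]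
    · exact Int.modEq_iff_dvd.mpr ⟨b t, by ring⟩
  simp only [Int.even_iff, this.eq]

lemma eq_of_altSum_natCast_add_one_modEq (hk : Odd k) {u v : ℕ} (hu : u < k) (hv : v < k)
    (h : altSum (fun t => (t : ℤ) + 1) u ≡ altSum (fun t => (t : ℤ) + 1) v [ZMOD k]) :
    u = v := by
  have hk2 := Nat.odd_iff.mp hk
  have heq := Int.eq_zero_of_abs_lt_dvd h.symm.dvd (abs_lt.mpr ⟨?_, ?_⟩)
  all_goals rw [altSum_natCast_add_one, altSum_natCast_add_one] at *; split_ifs at * <;> omega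

lemma eq_of_altSum_modEq (hk : Odd k) (hb : ∀ t < k - 1, b t ≡ t + 1 [ZMOD k]) {u v : ℕ}
    (hu : u < k) (hv : v < k) (h : altSum b u ≡ altSum b v [ZMOD k]) : u = v :=
  eq_of_altSum_natCast_add_one_modEq hk hu hv <|
    ((altSum_modEq fun t _ => hb t (by omega)).symm.trans h).trans
      (altSum_modEq fun t _ => hb t (by omega))

end AltSum

section Zigzag

variable {k : ℕ} {b : ℕ → ℤ}

def zigzagColumn (k : ℕ) (t : ℤ) : ℕ :=
  if Even (t / k) then (t % k).toNat else k - 1 - (t % k).toNat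

/-- The grid point in column `c < k` and row `w` is the integer `altSum b c + k * w`; at time
`k * w + r` the path is in row `w`, column `r` or `k - 1 - r` according to the parity of `w`. -/
def zigzagVertex (k : ℕ) (b : ℕ → ℤ) (t : ℤ) : ℤ :=
  altSum b (zigzagColumn k t) + k * (t / k)

lemma exists_eq_mul_add (hk : 0 < k) (t : ℤ) : ∃ w, ∃ r < k, t = k * w + r := by
  have h0 := Int.emod_nonneg t (by omega : (k : ℤ) ≠ 0)
  have h1 := Int.emod_lt_of_pos t (by omega : (0 : ℤ) < k)
  exact ⟨t / k, (t % k).toNat, by omega, by have := Int.mul_ediv_add_emod t k; omega⟩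

lemma zigzagVertex_mul_add (w : ℤ) {r : ℕ} (hr : r < k) :
    zigzagVertex k b (k * w + r) = altSum b (if Even w then r else k - 1 - r) + k * w := by
  have hq : (k * w + r) / (k : ℤ) = w := by
    rw [add_comm, Int.add_mul_ediv_left _ _ (by omega),
      Int.ediv_eq_zero_of_lt (by omega) (by omega), zero_add]
  have hr' : (k * w + r) % (k : ℤ) = r := by
    rw [add_comm, Int.add_mul_emod_self_left, Int.emod_eq_of_lt (by omega) (by omega)]
  simp only [zigzagVertex, zigzagColumn, hq, hr', Int.toNat_natCast]

lemma zigzagVertex_injective (hk : Odd k) (hb : ∀ t < k - 1, b t ≡ t + 1 [ZMOD k]) :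
    Function.Injective (zigzagVertex k b) := by
  intro t t' h
  obtain ⟨w, r, hr, rfl⟩ := exists_eq_mul_add hk.pos t
  obtain ⟨w', r', hr', rfl⟩ := exists_eq_mul_add hk.pos t'
  rw [zigzagVertex_mul_add w hr, zigzagVertex_mul_add w' hr'] at h
  have hcol := eq_of_altSum_modEq (u := if Even w then r else k - 1 - r)
    (v := if Even w' then r' else k - 1 - r') hk hb (by split_ifs <;> omega)
    (by split_ifs <;> omega) (Int.modEq_iff_dvd.mpr ⟨w - w', by linarith⟩)
  rw [hcol, add_right_inj, mul_right_inj' (by exact_mod_cast hk.pos.ne')] at h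
  subst h
  split_ifs at hcol <;> omega

lemma zigzagVertex_surjective (hk : Odd k) (hb : ∀ t < k - 1, b t ≡ t + 1 [ZMOD k]) :
    Function.Surjective (zigzagVertex k b) := by
  intro n
  obtain ⟨⟨c, hc⟩, hcn, -⟩ :=
    existsUnique_fin_modEq hk.pos (fun u hu v hv => eq_of_altSum_modEq hk hb hu hv) n
  obtain ⟨w, hw⟩ := Int.modEq_iff_dvd.mp hcn
  refine ⟨k * w + ((if Even w then c else k - 1 - c : ℕ) : ℤ), ?_⟩
  rw [zigzagVertex_mul_add w (by split_ifs <;> omega),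
    show (if Even w then (if Even w then c else k - 1 - c)
      else k - 1 - (if Even w then c else k - 1 - c)) = c by split_ifs <;> omega]
  linarith

def rungBase (b : ℕ → ℤ) (u : ℕ) : ℤ := if Even u then altSum b u else altSum b (u + 1)

lemma sym2_altSum_succ (b : ℕ → ℤ) (u : ℕ) (c : ℤ) :
    s(altSum b u + c, altSum b (u + 1) + c) = s(rungBase b u + c, rungBase b u + c + b u) := by
  rw [rungBase, altSum_succ]
  rcases Nat.even_or_odd u with hu | hu
  · rw [if_pos hu, hu.neg_one_pow]
    exact Sym2.eq_iff.mpr (Or.inl ⟨rfl, by ring⟩)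
  · rw [if_neg (Nat.not_even_iff_odd.mpr hu), hu.neg_one_pow]
    exact Sym2.eq_iff.mpr (Or.inr ⟨by ring, by ring⟩)

/-- `s(n, n + d)` is an edge of the zigzag path: a rung of length `b u` inside a row, or a step
of length `k` between the last columns of rows `2m`, `2m + 1` or the first columns of rows
`2m + 1`, `2m + 2`. -/
def IsZigzagEdge (k : ℕ) (b : ℕ → ℤ) (n d : ℤ) : Prop :=
  (∃ u < k - 1, d = b u ∧ n ≡ rungBase b u [ZMOD k]) ∨
    d = k ∧ (n ≡ altSum b (k - 1) [ZMOD 2 * k] ∨ n ≡ k [ZMOD 2 * k])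

lemma isZigzagEdge_rung {u : ℕ} (hu : u < k - 1) (w : ℤ) :
    IsZigzagEdge k b (rungBase b u + k * w) (b u) :=
  Or.inl ⟨u, hu, rfl, Int.modEq_iff_dvd.mpr ⟨-w, by ring⟩⟩

lemma exists_isZigzagEdge (hk : 0 < k) (t : ℤ) : ∃ n d, IsZigzagEdge k b n d ∧
    s(zigzagVertex k b t, zigzagVertex k b (t + 1)) = s(n, n + d) := by
  obtain ⟨w, r, hr, rfl⟩ := exists_eq_mul_add hk t
  by_cases hr1 : r + 1 < k
  · rw [show k * w + r + 1 = k * w + ((r + 1 : ℕ) : ℤ) by push_cast; ring,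
      zigzagVertex_mul_add w hr, zigzagVertex_mul_add w hr1]
    by_cases hw : Even w
    · simp only [hw, if_true]
      exact ⟨_, _, isZigzagEdge_rung (by omega) w, sym2_altSum_succ b r _⟩
    · simp only [hw, if_false]
      rw [show k - 1 - r = k - 1 - (r + 1) + 1 by omega, Sym2.eq_swap]
      exact ⟨_, _, isZigzagEdge_rung (by omega) w, sym2_altSum_succ b _ _⟩
  · obtain rfl : r = k - 1 := by omega
    rw [show k * w + ((k - 1 : ℕ) : ℤ) + 1 = k * (w + 1) + ((0 : ℕ) : ℤ) by
        rw [Nat.cast_pred hk]; push_cast; ring,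
      zigzagVertex_mul_add w hr, zigzagVertex_mul_add (w + 1) hk]
    rcases Int.even_or_odd w with ⟨m, rfl⟩ | ⟨m, rfl⟩
    · have hodd : ¬Even (m + m + 1) := by rw [Int.not_even_iff_odd]; exact ⟨m, by ring⟩
      simp only [Even.add_self, hodd, if_true, if_false, Nat.sub_zero]
      exact ⟨_, k, Or.inr ⟨rfl, Or.inl (Int.modEq_iff_dvd.mpr ⟨-m, by ring⟩)⟩,
        Sym2.eq_iff.mpr (Or.inl ⟨rfl, by ring⟩)⟩
    · have hodd : ¬Even (2 * m + 1) := by rw [Int.not_even_iff_odd]; exact ⟨m, rfl⟩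
      have heven : Even (2 * m + 1 + 1) := ⟨m + 1, by ring⟩
      simp only [hodd, heven, if_true, if_false, Nat.sub_self, altSum_zero, zero_add]
      exact ⟨_, k, Or.inr ⟨rfl, Or.inr (Int.modEq_iff_dvd.mpr ⟨-m, by ring⟩)⟩,
        Sym2.eq_iff.mpr (Or.inl ⟨rfl, by ring⟩)⟩

lemma IsZigzagEdge.exists_eq (hk : 0 < k) {n d : ℤ} (h : IsZigzagEdge k b n d) :
    ∃ t, s(zigzagVertex k b t, zigzagVertex k b (t + 1)) = s(n, n + d) := by
  rcases h with ⟨u, hu, rfl, hn⟩ | ⟨rfl, hn | hn⟩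
  · obtain ⟨w, hw⟩ := Int.modEq_iff_dvd.mp hn.symm
    obtain rfl : n = rungBase b u + k * w := by linarith
    by_cases he : Even w
    · refine ⟨k * w + u, ?_⟩
      rw [show k * w + u + 1 = k * w + ((u + 1 : ℕ) : ℤ) by push_cast; ring,
        zigzagVertex_mul_add w (by omega), zigzagVertex_mul_add w (by omega)]
      simp only [he, if_true]
      exact sym2_altSum_succ b u _
    · refine ⟨k * w + ((k - 2 - u : ℕ) : ℤ), ?_⟩
      rw [show k * w + ((k - 2 - u : ℕ) : ℤ) + 1 = k * w + ((k - 1 - u : ℕ) : ℤ) by omega,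
        zigzagVertex_mul_add w (by omega), zigzagVertex_mul_add w (by omega)]
      simp only [he, if_false]
      rw [show k - 1 - (k - 2 - u) = u + 1 by omega, show k - 1 - (k - 1 - u) = u by omega,
        Sym2.eq_swap]
      exact sym2_altSum_succ b u _
  · obtain ⟨m, hm⟩ := Int.modEq_iff_dvd.mp hn.symm
    refine ⟨k * (2 * m) + ((k - 1 : ℕ) : ℤ), ?_⟩
    rw [show k * (2 * m) + ((k - 1 : ℕ) : ℤ) + 1 = k * (2 * m + 1) + ((0 : ℕ) : ℤ) by
        rw [Nat.cast_pred hk]; push_cast; ring,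
      zigzagVertex_mul_add _ (by omega), zigzagVertex_mul_add _ hk]
    have hodd : ¬Even (2 * m + 1) := by rw [Int.not_even_iff_odd]; exact ⟨m, rfl⟩
    simp only [even_two_mul, hodd, if_true, if_false, Nat.sub_zero]
    exact Sym2.eq_iff.mpr (Or.inl ⟨by linarith, by linarith⟩)
  · obtain ⟨m, hm⟩ := Int.modEq_iff_dvd.mp hn.symm
    refine ⟨k * (2 * m + 1) + ((k - 1 : ℕ) : ℤ), ?_⟩
    rw [show k * (2 * m + 1) + ((k - 1 : ℕ) : ℤ) + 1 = k * (2 * m + 1 + 1) + ((0 : ℕ) : ℤ) by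
        rw [Nat.cast_pred hk]; push_cast; ring,
      zigzagVertex_mul_add _ (by omega), zigzagVertex_mul_add _ hk]
    have hodd : ¬Even (2 * m + 1) := by rw [Int.not_even_iff_odd]; exact ⟨m, rfl⟩
    have heven : Even (2 * m + 1 + 1) := ⟨m + 1, by ring⟩
    simp only [hodd, heven, if_true, if_false, Nat.sub_self, altSum_zero, zero_add]
    exact Sym2.eq_iff.mpr (Or.inl ⟨by linarith, by linarith⟩)

lemma pos_of_mem_image_union (hk : 0 < k) (hpos : ∀ u < k - 1, 0 < b u) {d : ℤ}
    (hd : d ∈ b '' Set.Iio (k - 1) ∪ {(k : ℤ)}) : 0 < d := by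
  rcases hd with ⟨u, hu, rfl⟩ | rfl
  exacts [hpos u hu, by exact_mod_cast hk]

lemma IsZigzagEdge.mem {n d : ℤ} (h : IsZigzagEdge k b n d) :
    d ∈ b '' Set.Iio (k - 1) ∪ {(k : ℤ)} := by
  rcases h with ⟨u, hu, rfl, -⟩ | ⟨rfl, -⟩
  exacts [Or.inl ⟨u, hu, rfl⟩, Or.inr rfl]

lemma apply_ne_of_modEq_succ (hb : ∀ t < k - 1, b t ≡ t + 1 [ZMOD k]) {u : ℕ}
    (hu : u < k - 1) : b u ≠ k := fun h => by
  have hdvd : (k : ℤ) ∣ u + 1 := Int.modEq_zero_iff_dvd.mp <|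
    (h ▸ hb u hu).symm.trans (Int.modEq_zero_iff_dvd.mpr dvd_rfl)
  have := Int.le_of_dvd (by omega) hdvd
  omega

lemma injOn_of_modEq_succ (hb : ∀ t < k - 1, b t ≡ t + 1 [ZMOD k]) :
    Set.InjOn b (Set.Iio (k - 1)) := fun u hu v hv h => by
  have huv : ((u + 1 : ℕ) : ℤ) ≡ ((v + 1 : ℕ) : ℤ) [ZMOD k] := by
    push_cast; exact (hb u hu).symm.trans (h ▸ hb v hv)
  have := (Int.natCast_modEq_iff.mp huv).eq_of_lt_of_lt (by simp at hu; omega)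
    (by simp at hv; omega)
  omega

lemma isZigzagEdge_rung_iff (hb : ∀ t < k - 1, b t ≡ t + 1 [ZMOD k]) {u : ℕ}
    (hu : u < k - 1) (m : ℤ) : IsZigzagEdge k b m (b u) ↔ m ≡ rungBase b u [ZMOD k] := by
  refine ⟨fun h => ?_, fun h => Or.inl ⟨u, hu, rfl, h⟩⟩
  rcases h with ⟨v, hv, huv, hm⟩ | ⟨hk', -⟩
  · rwa [injOn_of_modEq_succ hb hu hv huv]
  · exact absurd hk' (apply_ne_of_modEq_succ hb hu)

lemma isZigzagEdge_natCast_iff (hb : ∀ t < k - 1, b t ≡ t + 1 [ZMOD k]) (m : ℤ) :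
    IsZigzagEdge k b m k ↔ m ≡ altSum b (k - 1) [ZMOD 2 * k] ∨ m ≡ k [ZMOD 2 * k] := by
  refine ⟨fun h => ?_, fun h => Or.inr ⟨rfl, h⟩⟩
  rcases h with ⟨v, hv, hkv, -⟩ | ⟨-, h⟩
  exacts [absurd hkv.symm (apply_ne_of_modEq_succ hb hv), h]

lemma existsUnique_isZigzagEdge (hk : Odd k) (hb : ∀ t < k - 1, b t ≡ t + 1 [ZMOD k])
    (heven : Even (altSum b (k - 1))) {d : ℤ} (hd : d ∈ b '' Set.Iio (k - 1) ∪ {(k : ℤ)})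
    (n : ℤ) : ∃! j : Fin k, IsZigzagEdge k b (n - 2 * j) d := by
  rcases hd with ⟨u, hu, rfl⟩ | rfl
  · simp_rw [isZigzagEdge_rung_iff hb hu, sub_modEq_iff_modEq_sub]
    exact existsUnique_fin_two_mul_modEq hk _
  · have hk' : Odd (k : ℤ) := by exact_mod_cast hk
    simp_rw [isZigzagEdge_natCast_iff hb, sub_two_mul_modEq_two_mul_iff hk]
    rcases Int.even_or_odd n with hn | hn
    · have h2 : ¬Even (n - k) := Int.not_even_iff_odd.mpr (hn.sub_odd hk')
      simp only [hn.sub heven, h2, true_and, false_and, or_false]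
      exact existsUnique_fin_two_mul_modEq hk _
    · have h1 : ¬Even (n - altSum b (k - 1)) := Int.not_even_iff_odd.mpr (hn.sub_even heven)
      simp only [h1, hn.sub_odd hk', true_and, false_and, false_or]
      exact existsUnique_fin_two_mul_modEq hk _

noncomputable def zigzagEquiv (hk : Odd k) (hb : ∀ t < k - 1, b t ≡ t + 1 [ZMOD k]) : ℤ ≃ ℤ :=
  Equiv.ofBijective (zigzagVertex k b)
    ⟨zigzagVertex_injective hk hb, zigzagVertex_surjective hk hb⟩

@[simp] lemma zigzagEquiv_apply (hk : Odd k) (hb : ∀ t < k - 1, b t ≡ t + 1 [ZMOD k]) (t : ℤ) :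
    zigzagEquiv hk hb t = zigzagVertex k b t := rfl

noncomputable def zigzagPath (hk : Odd k) (hb : ∀ t < k - 1, b t ≡ t + 1 [ZMOD k]) (c : ℤ) :
    SimpleGraph ℤ :=
  (hasse ℤ).map ((zigzagEquiv hk hb).trans (Equiv.addRight c)).toEmbedding

lemma isHamPath_zigzagPath (hk : Odd k) (hb : ∀ t < k - 1, b t ≡ t + 1 [ZMOD k])
    (hpos : ∀ u < k - 1, 0 < b u) (c : ℤ) :
    IsHamPath (cay (b '' Set.Iio (k - 1) ∪ {(k : ℤ)})) (zigzagPath hk hb c) :=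
  isHamPath_map_hasse _ fun t => by
    obtain ⟨n, d, h, he⟩ := exists_isZigzagEdge (b := b) hk.pos t
    simp only [Equiv.trans_apply, zigzagEquiv_apply, Equiv.coe_addRight]
    exact cay_adj_of_sym2_eq h.mem (pos_of_mem_image_union hk.pos hpos h.mem).ne'
      (by rw [sym2_add_right he c, add_right_comm])

lemma mem_edgeSet_zigzagPath (hk : Odd k) (hb : ∀ t < k - 1, b t ≡ t + 1 [ZMOD k])
    (hpos : ∀ u < k - 1, 0 < b u) (c : ℤ) {n d : ℤ} (hd : 0 < d) :
    s(n, n + d) ∈ (zigzagPath hk hb c).edgeSet ↔ IsZigzagEdge k b (n - c) d := by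
  simp only [zigzagPath, mem_edgeSet_map_hasse, Equiv.trans_apply, Equiv.coe_addRight,
    zigzagEquiv_apply]
  constructor
  · rintro ⟨t, ht⟩
    obtain ⟨n', d', hn', he⟩ := exists_isZigzagEdge (b := b) hk.pos t
    rw [sym2_add_right he c, add_right_comm,
      sym2_add_eq_sym2_add_iff hd (pos_of_mem_image_union hk.pos hpos hn'.mem)] at ht
    rwa [ht.1, ht.2, add_sub_cancel_right]
  · intro h
    obtain ⟨t, ht⟩ := h.exists_eq hk.pos
    refine ⟨t, ?_⟩
    rw [sym2_add_right ht c, sub_add_cancel, add_right_comm, sub_add_cancel]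

theorem hamDecomp_cay (hk : Odd k) (hb : ∀ t < k - 1, b t ≡ t + 1 [ZMOD k])
    (hpos : ∀ u < k - 1, 0 < b u) (heven : Even (altSum b (k - 1))) :
    HamDecomp (cay (b '' Set.Iio (k - 1) ∪ {(k : ℤ)})) k := by
  refine hamDecomp_of_existsUnique _ (fun j => isHamPath_zigzagPath hk hb hpos (2 * j))
    fun z hz => ?_
  obtain ⟨n, d, hd, rfl⟩ := exists_eq_sym2_of_mem_edgeSet_cay hz
  simp_rw [mem_edgeSet_zigzagPath hk hb hpos _ (pos_of_mem_image_union hk.pos hpos hd)]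
  exact existsUnique_isZigzagEdge hk hb heven hd n

end Zigzag

theorem stmt13_general (k : ℕ) (hkodd : Odd k)
    (a : Fin (k-1) → ℤ) (hapos : ∀ i, 0 < a i)
    (hcong : ∀ i, a i % (k : ℤ) = (((i : ℕ) : ℤ) + 1) % (k : ℤ))
    (heven : Even (∑ i, a i)) :
    HamDecomp (cay (Set.range a ∪ {(k : ℤ)})) k := by
  set b : ℕ → ℤ := fun t => if h : t < k - 1 then a ⟨t, h⟩ else 0
  have hba (i : Fin (k - 1)) : b i = a i := dif_pos i.2
  have hrange : Set.range a = b '' Set.Iio (k - 1) := by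
    ext d
    exact ⟨fun ⟨i, hi⟩ => ⟨i, i.2, hi ▸ hba i⟩, fun ⟨t, ht, hd⟩ => ⟨⟨t, ht⟩, hba ⟨t, ht⟩ ▸ hd⟩⟩
  have hsum : ∑ t ∈ Finset.range (k - 1), b t = ∑ i, a i := by
    rw [← Fin.sum_univ_eq_sum_range]
    exact Finset.sum_congr rfl fun i _ => hba i
  rw [hrange]
  exact hamDecomp_cay hkodd (fun t ht => hba ⟨t, ht⟩ ▸ hcong ⟨t, ht⟩)
    (fun t ht => hba ⟨t, ht⟩ ▸ hapos ⟨t, ht⟩) (even_altSum_iff.mpr (hsum ▸ heven))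

theorem stmt13 (k : ℕ) (hk3 : 3 ≤ k) (hkodd : Odd k)
    (a : Fin (k-1) → ℤ) (hapos : ∀ i, 0 < a i) (hainj : Function.Injective a)
    (hcong : ∀ i, a i % (k : ℤ) = (((i : ℕ) : ℤ) + 1) % (k : ℤ))
    (heven : Even (∑ i, a i)) :
    HamDecomp (cay (Set.range a ∪ {(k : ℤ)})) k :=
  stmt13_general k hkodd a hapos hcong heven
end

section
/- If a finite path P in Cay(ℤ, S) has endpoints 0 and n, contains exactly one vertex from each congruence class modulo n (with both endpoints in class 0), then the union of the translates P + ni over all i ∈ ℤ is a two-way-infinite Hamilton path in Cay(ℤ, S). -/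
/-- Translate of a graph on ℤ by `t`. -/
def shiftGraph (H : SimpleGraph ℤ) (t : ℤ) : SimpleGraph ℤ where
  Adj u v := H.Adj (u - t) (v - t)
  symm := ⟨fun _ _ h => H.adj_symm h⟩
  loopless := ⟨fun _ h => H.irrefl h⟩

/-- The path graph determined by a list of vertices. -/
def listGraph (l : List ℤ) : SimpleGraph ℤ :=
  SimpleGraph.fromEdgeSet {e | ∃ i : ℕ, i + 1 < l.length ∧ e = s(l.getD i 0, l.getD (i+1) 0)}

/-!
Read the translates `P + n * q` one after another: step `n * q + r` (`0 ≤ r < n`) of the resulting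
walk is `P r + n * q`, and consecutive translates are glued at their common endpoint `n * q`.
Because `P 0, …, P (n - 1)` is a complete residue system mod `n`, this walk is a bijection
`ℤ → ℤ`, and the edges of the union of translates are exactly its steps. Hence the union is
isomorphic to the path graph on `ℤ`, which is connected and 2-regular. Its edges lie in
`Cay(ℤ, S)` because those of `P` do and `Cay(ℤ, S)` is translation invariant.
-/

open SimpleGraph

theorem SimpleGraph.isHamPath_of_iso_hasse {G H : SimpleGraph ℤ} (hle : H ≤ G)
    (e : hasse ℤ ≃g H) : IsHamPath G H := by
  refine ⟨hle, e.connected_iff.mp ⟨hasse_preconnected_of_succ ℤ⟩, fun v => ?_⟩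
  obtain ⟨k, rfl⟩ := e.surjective v
  have hnbr : H.neighborSet (e k) = {e (k - 1), e (k + 1)} := by
    ext w
    obtain ⟨j, rfl⟩ := e.surjective w
    simp only [e.apply_mem_neighborSet_iff, mem_neighborSet, hasse_adj,
      Order.covBy_iff_add_one_eq, Set.mem_insert_iff, Set.mem_singleton_iff,
      e.injective.eq_iff]
    omega
  rw [hnbr, Set.ncard_pair (e.injective.ne (by omega))]

theorem listGraph_le {G : SimpleGraph ℤ} {l : List ℤ} (h : l.IsChain G.Adj) :
    listGraph l ≤ G := by
  rw [listGraph, fromEdgeSet_le]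
  rintro _ ⟨⟨i, hi, rfl⟩, -⟩
  rw [List.getD_eq_getElem _ _ (by omega), List.getD_eq_getElem _ _ hi]
  exact h.getElem i hi

@[simp]
theorem shiftGraph_adj {H : SimpleGraph ℤ} {t u v : ℤ} :
    (shiftGraph H t).Adj u v ↔ H.Adj (u - t) (v - t) :=
  Iff.rfl

theorem shiftGraph_le_cay {S : Set ℤ} {H : SimpleGraph ℤ} (h : H ≤ cay S) (t : ℤ) :
    shiftGraph H t ≤ cay S := by
  intro u v huv
  obtain ⟨hne, hS⟩ := h huv
  refine ⟨fun huv' => hne (by rw [huv']), ?_⟩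
  simpa only [sub_sub_sub_cancel_right] using hS

theorem List.length_eq_of_existsUnique_emod {n : ℤ} {m : List ℤ} (hn : 0 < n) (hm : m.Nodup)
    (h : ∀ x : ℤ, ∃! v, v ∈ m ∧ v % n = x % n) : m.length = n.toNat := by
  have hres : (m.map (· % n)).Nodup := by
    refine hm.map_on fun x hx y hy hxy => ?_
    obtain ⟨v, -, hv⟩ := h x
    exact (hv x ⟨hx, rfl⟩).trans (hv y ⟨hy, hxy.symm⟩).symm
  have hrange : (m.map (· % n)).toFinset = Finset.Ico 0 n := by
    ext z
    simp only [List.mem_toFinset, List.mem_map, Finset.mem_Ico]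
    constructor
    · rintro ⟨v, -, rfl⟩
      exact ⟨Int.emod_nonneg v hn.ne', Int.emod_lt_of_pos v hn⟩
    · rintro ⟨hz0, hzn⟩
      obtain ⟨v, ⟨hv, hvz⟩, -⟩ := h z
      exact ⟨v, hv, by rwa [Int.emod_eq_of_lt hz0 hzn] at hvz⟩
  have hcard := List.toFinset_card_of_nodup hres
  rw [hrange, Int.card_Ico, List.length_map] at hcard
  omega

structure IsFundamentalPath (n : ℤ) (l : List ℤ) : Prop where
  pos : 0 < n
  nodup : l.Nodup
  head?_eq : l.head? = some 0
  getLast?_eq : l.getLast? = some n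
  existsUnique_emod : ∀ x : ℤ, ∃! v, v ∈ l.dropLast ∧ v % n = x % n

/-- Step `k` of the walk along `l`, `l + n`, `l + 2 * n`, …. -/
def periodicPath (l : List ℤ) (n k : ℤ) : ℤ :=
  l.getD (k % n).toNat 0 + n * (k / n)

theorem periodicPath_mul_add_of_lt {n : ℤ} (l : List ℤ) (q : ℤ) {r : ℤ} (hr0 : 0 ≤ r)
    (hrn : r < n) : periodicPath l n (n * q + r) = l.getD r.toNat 0 + n * q := by
  rw [periodicPath, Int.mul_add_emod_self_left, Int.mul_add_ediv_left _ _ (by omega),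
    Int.emod_eq_of_lt hr0 hrn, Int.ediv_eq_zero_of_lt hr0 hrn, add_zero]

namespace IsFundamentalPath

variable {n : ℤ} {l : List ℤ}

theorem ne_nil (hl : IsFundamentalPath n l) : l ≠ [] := by
  rintro rfl
  simpa using hl.head?_eq

theorem length_dropLast (hl : IsFundamentalPath n l) : l.dropLast.length = n.toNat :=
  List.length_eq_of_existsUnique_emod hl.pos (hl.nodup.sublist l.dropLast_sublist)
    hl.existsUnique_emod

theorem length_eq (hl : IsFundamentalPath n l) : l.length = n.toNat + 1 := by
  have := hl.length_dropLast
  have := List.length_pos_iff.mpr hl.ne_nil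
  rw [List.length_dropLast] at *
  omega

theorem getD_zero (hl : IsFundamentalPath n l) : l.getD 0 0 = 0 := by
  rw [List.getD_eq_getElem _ _ (List.length_pos_iff.mpr hl.ne_nil), List.getElem_zero]
  simpa [List.head?_eq_some_head hl.ne_nil] using hl.head?_eq

theorem getD_toNat (hl : IsFundamentalPath n l) : l.getD n.toNat 0 = n := by
  have hlen := hl.length_eq
  rw [List.getD_eq_getElem _ _ (by omega)]
  simpa [List.getLast?_eq_some_getLast hl.ne_nil, List.getLast_eq_getElem, hlen] using
    hl.getLast?_eq

theorem getD_mem_dropLast (hl : IsFundamentalPath n l) {i : ℕ} (hi : i < n.toNat) :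
    l.getD i 0 ∈ l.dropLast := by
  have := hl.length_dropLast
  rw [List.getD_eq_getElem _ _ (by rw [hl.length_eq]; omega),
    ← List.getElem_dropLast (by omega)]
  exact List.getElem_mem _

theorem eq_of_getD_emod_eq (hl : IsFundamentalPath n l) {i j : ℕ} (hi : i < n.toNat)
    (hj : j < n.toNat) (h : l.getD i 0 % n = l.getD j 0 % n) : i = j := by
  obtain ⟨v, -, hv⟩ := hl.existsUnique_emod (l.getD i 0)
  have hij := (hv _ ⟨hl.getD_mem_dropLast hi, rfl⟩).trans
    (hv _ ⟨hl.getD_mem_dropLast hj, h.symm⟩).symm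
  have := hl.length_eq
  rw [List.getD_eq_getElem _ _ (by omega), List.getD_eq_getElem _ _ (by omega)] at hij
  exact (hl.nodup.getElem_inj_iff).mp hij

theorem exists_getD_emod_eq (hl : IsFundamentalPath n l) (x : ℤ) :
    ∃ i < n.toNat, l.getD i 0 % n = x % n := by
  obtain ⟨v, ⟨hv, hvx⟩, -⟩ := hl.existsUnique_emod x
  obtain ⟨i, hi, rfl⟩ := List.mem_iff_getElem.mp hv
  have := hl.length_dropLast
  refine ⟨i, by omega, ?_⟩
  rwa [List.getD_eq_getElem _ _ (by rw [hl.length_eq]; omega), ← List.getElem_dropLast hi]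

theorem periodicPath_mul_add (hl : IsFundamentalPath n l) (q : ℤ) {i : ℕ} (hi : i ≤ n.toNat) :
    periodicPath l n (n * q + i) = l.getD i 0 + n * q := by
  rcases hi.lt_or_eq with hi | rfl
  · simpa using periodicPath_mul_add_of_lt l q (r := i) (by omega) (by omega)
  · -- the last vertex `n` of `l` is the first vertex `0 + n` of the next translate
    have h := periodicPath_mul_add_of_lt l (q + 1) le_rfl hl.pos
    rw [mul_add_one, add_zero, Int.toNat_zero, hl.getD_zero] at h
    rw [Int.toNat_of_nonneg hl.pos.le, hl.getD_toNat, h]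
    ring

theorem periodicPath_injective (hl : IsFundamentalPath n l) :
    Function.Injective (periodicPath l n) := by
  intro a b hab
  have hpos := hl.pos
  have := Int.emod_nonneg a hpos.ne'
  have := Int.emod_nonneg b hpos.ne'
  have := Int.emod_lt_of_pos a hpos
  have := Int.emod_lt_of_pos b hpos
  have hmod : l.getD (a % n).toNat 0 % n = l.getD (b % n).toNat 0 % n := by
    simpa [periodicPath, Int.add_mul_emod_self_left] using congrArg (· % n) hab
  have hr := hl.eq_of_getD_emod_eq (by omega) (by omega) hmod
  have hq : a / n = b / n := by
    rw [periodicPath, periodicPath, hr, add_right_inj] at hab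
    exact mul_left_cancel₀ hpos.ne' hab
  rw [← Int.mul_ediv_add_emod a n, ← Int.mul_ediv_add_emod b n, hq]
  omega

theorem periodicPath_surjective (hl : IsFundamentalPath n l) :
    Function.Surjective (periodicPath l n) := by
  intro x
  obtain ⟨i, hi, hix⟩ := hl.exists_getD_emod_eq x
  obtain ⟨q, hq⟩ := Int.ModEq.dvd hix
  exact ⟨n * q + i, by rw [hl.periodicPath_mul_add q hi.le]; linarith⟩

theorem getD_eq_periodicPath_sub (hl : IsFundamentalPath n l) (q : ℤ) {i : ℕ}
    (hi : i ≤ n.toNat) : l.getD i 0 = periodicPath l n (n * q + i) - n * q := by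
  rw [hl.periodicPath_mul_add q hi, add_sub_cancel_right]

theorem iSup_shiftGraph_adj_periodicPath_add_one (hl : IsFundamentalPath n l) (k : ℤ) :
    (⨆ i : ℤ, shiftGraph (listGraph l) (n * i)).Adj
      (periodicPath l n k) (periodicPath l n (k + 1)) := by
  have hpos := hl.pos
  have := Int.emod_nonneg k hpos.ne'
  have := Int.emod_lt_of_pos k hpos
  have hk := Int.mul_ediv_add_emod k n
  have hlen := hl.length_eq
  rw [iSup_adj]
  refine ⟨k / n, ⟨⟨(k % n).toNat, by omega, ?_⟩, ?_⟩⟩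
  · rw [hl.getD_eq_periodicPath_sub (k / n) (i := (k % n).toNat) (by omega),
      hl.getD_eq_periodicPath_sub (k / n) (i := (k % n).toNat + 1) (by omega)]
    congr 3 <;> omega
  · exact fun h => (lt_add_one k).ne (hl.periodicPath_injective (sub_left_inj.mp h))

theorem iSup_shiftGraph_adj_periodicPath (hl : IsFundamentalPath n l) {a b : ℤ} :
    (⨆ i : ℤ, shiftGraph (listGraph l) (n * i)).Adj (periodicPath l n a) (periodicPath l n b) ↔
      b = a + 1 ∨ a = b + 1 := by
  refine ⟨fun h => ?_, ?_⟩
  · simp only [iSup_adj, shiftGraph_adj, listGraph, fromEdgeSet_adj, Set.mem_ofPred_eq] at h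
    obtain ⟨q, ⟨i, hi, he⟩, -⟩ := h
    have hlen := hl.length_eq
    rw [hl.getD_eq_periodicPath_sub q (i := i) (by omega),
      hl.getD_eq_periodicPath_sub q (i := i + 1) (by omega)] at he
    have hinj := hl.periodicPath_injective
    rcases Sym2.eq_iff.mp he with ⟨ha, hb⟩ | ⟨ha, hb⟩ <;>
      have := hinj (sub_left_inj.mp ha) <;> have := hinj (sub_left_inj.mp hb) <;> omega
  · rintro (rfl | rfl)
    exacts [hl.iSup_shiftGraph_adj_periodicPath_add_one a,
      (hl.iSup_shiftGraph_adj_periodicPath_add_one b).symm]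

noncomputable def periodicPathIso (hl : IsFundamentalPath n l) :
    hasse ℤ ≃g ⨆ i : ℤ, shiftGraph (listGraph l) (n * i) where
  toEquiv := Equiv.ofBijective _ ⟨hl.periodicPath_injective, hl.periodicPath_surjective⟩
  map_rel_iff' {a b} := by
    rw [hasse_adj, Order.covBy_iff_add_one_eq, Order.covBy_iff_add_one_eq]
    exact hl.iSup_shiftGraph_adj_periodicPath.trans (by omega)

end IsFundamentalPath

theorem stmt16_general (S : Set ℤ) (n : ℤ) (hn : 0 < n) (l : List ℤ)
    (hchain : l.Chain' (cay S).Adj) (hnodup : l.Nodup)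
    (hhead : l.head? = some 0) (hlast : l.getLast? = some n)
    (hclass : ∀ x : ℤ, ∃! v, v ∈ l.dropLast ∧ v % n = x % n) :
    IsHamPath (cay S) (⨆ i : ℤ, shiftGraph (listGraph l) (n * i)) :=
  isHamPath_of_iso_hasse (iSup_le fun _ => shiftGraph_le_cay (listGraph_le hchain) _)
    (IsFundamentalPath.periodicPathIso ⟨hn, hnodup, hhead, hlast, hclass⟩)

theorem stmt16 (S : Set ℤ) (h0 : 0 ∉ S) (hinv : ∀ s, s ∈ S → -s ∈ S)
    (n : ℤ) (hn : 0 < n) (l : List ℤ)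
    (hchain : l.Chain' (cay S).Adj) (hnodup : l.Nodup)
    (hhead : l.head? = some 0) (hlast : l.getLast? = some n)
    (hclass : ∀ x : ℤ, ∃! v, v ∈ l.dropLast ∧ v % n = x % n) :
    IsHamPath (cay S) (⨆ i : ℤ, shiftGraph (listGraph l) (n * i)) :=
  stmt16_general S n hn l hchain hnodup hhead hlast hclass
end
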